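/- Let σ be a doubling measure on ℝⁿ. Then for every cube Q and every 0 < δ < 1, the σ-measure of the inner halo satisfies |Q ∖ (1−δ)Q|_σ ≤ (C / ln(1/δ)) |Q|_σ, where C depends only on n and the doubling constant of σ. -/

import Mathlib

open MeasureTheory ENNReal

noncomputable section

/-- The axis-parallel cube in `ℝⁿ` with center `c` and side length `l`. -/
def Cube (n : ℕ) (c : Fin n → ℝ) (l : ℝ) : Set (Fin n → ℝ) :=
  {x | ∀ i, |x i - c i| ≤ l / 2}

/-- A measure is doubling with constant `C` if `μ(2Q) ≤ C μ(Q)` for all cubes `Q`. -/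
def IsDoubling {n : ℕ} (μ : Measure (Fin n → ℝ)) (C : ℝ) : Prop :=
  ∀ (c : Fin n → ℝ) (l : ℝ), 0 < l →
    μ (Cube n c (2 * l)) ≤ ENNReal.ofReal C * μ (Cube n c l)

/-!
Cubes are the closed balls of the sup norm, so we work with balls in a proper normed space.
Fix `2δ ≤ w ≤ 1/4` and project the halo `B(c, r) \ B(c, (1 - δ) r)` radially onto the sphere
of radius `(1 - 3w/2) r`. A maximal `2wr`-separated subset of the halo gives a cover of it by
balls of radius `2wr`; the balls of radius `wr/4` around the projected centres are disjoint and
lie in the annulus `B(c, (1 - w) r) \ B(c, (1 - 2w) r)`, and four doublings compare the two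
families, so `σ(halo) ≤ D⁴ σ(annulus)`. The choices `w = 2δ, 4δ, …, 2^m δ` with
`m ≈ log₂ (1/δ)` give `m` disjoint annuli inside the ball, hence `m σ(halo) ≤ D⁴ σ(ball)`.
-/

open Metric Set Function

section Packing

variable {X : Type*} [PseudoMetricSpace X]

theorem TotallyBounded.exists_finite_separated_cover {A : Set X} (hA : TotallyBounded A)
    {s : ℝ} (hs : 0 < s) :
    ∃ T ⊆ A, T.Finite ∧ T.Pairwise (fun x y ↦ s < dist x y) ∧ A ⊆ ⋃ x ∈ T, closedBall x s := by
  set ε := s.toNNReal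
  have hε : ε ≠ 0 := by simpa [ε] using hs
  have hpacking : packingNumber ε A ≠ ⊤ := by
    obtain ⟨N, -, hN, hcover⟩ := exists_finite_isCover_of_totallyBounded (ε := ε / 2) (by simpa) hA
    refine ne_top_of_le_ne_top (Set.encard_ne_top_iff.mpr hN) ?_
    calc packingNumber ε A = packingNumber (2 * (ε / 2)) A := by rw [mul_div_cancel₀ _ two_ne_zero]
      _ ≤ externalCoveringNumber (ε / 2) A := packingNumber_two_mul_le_externalCoveringNumber _ A
      _ ≤ N.encard := hcover.externalCoveringNumber_le_encard
  refine ⟨maximalSeparatedSet ε A, maximalSeparatedSet_subset,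
    Set.encard_ne_top_iff.mp (encard_maximalSeparatedSet hpacking ▸ hpacking), ?_, ?_⟩
  · refine isSeparated_maximalSeparatedSet.mono' fun x y hxy ↦ ?_
    rwa [edist_dist, ← ENNReal.ofReal_coe_nnreal, Real.coe_toNNReal _ hs.le,
      ENNReal.ofReal_lt_ofReal_iff_of_nonneg hs.le] at hxy
  · simpa [ε, Real.coe_toNNReal _ hs.le] using
      (isCover_maximalSeparatedSet hpacking).subset_iUnion_closedBall

variable [MeasurableSpace X] [OpensMeasurableSpace X]

theorem TotallyBounded.measure_le_mul_of_separated_balls (μ : Measure X) {A B : Set X}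
    (hA : TotallyBounded A) (f : X → X) {s ρ : ℝ} (hs : 0 < s) {K : ℝ≥0∞}
    (hball : ∀ x ∈ A, μ (closedBall x s) ≤ K * μ (closedBall (f x) ρ))
    (hsep : ∀ x ∈ A, ∀ y ∈ A, s < dist x y → ρ + ρ < dist (f x) (f y))
    (hB : ∀ x ∈ A, closedBall (f x) ρ ⊆ B) :
    μ A ≤ K * μ B := by
  obtain ⟨T, hTA, hT, hTsep, hcover⟩ := hA.exists_finite_separated_cover hs
  have hdisj : T.PairwiseDisjoint (fun x ↦ closedBall (f x) ρ) := fun x hx y hy hxy ↦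
    closedBall_disjoint_closedBall (hsep x (hTA hx) y (hTA hy) (hTsep hx hy hxy))
  calc μ A ≤ μ (⋃ x ∈ T, closedBall x s) := measure_mono hcover
    _ ≤ ∑' x : T, μ (closedBall x s) := measure_biUnion_le μ hT.countable _
    _ ≤ ∑' x : T, K * μ (closedBall (f x) ρ) := ENNReal.tsum_le_tsum fun x ↦ hball x (hTA x.2)
    _ = K * μ (⋃ x ∈ T, closedBall (f x) ρ) := by
      rw [ENNReal.tsum_mul_left, measure_biUnion hT.countable hdisj
        fun _ _ ↦ measurableSet_closedBall]
    _ ≤ K * μ B := by gcongr; exact iUnion₂_subset fun x hx ↦ hB x (hTA hx)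

end Packing

section BallDoubling

variable {X : Type*} [PseudoMetricSpace X] [MeasurableSpace X]

def IsBallDoubling (μ : Measure X) (K : ℝ≥0∞) : Prop :=
  ∀ (x : X) (r : ℝ), 0 < r → μ (closedBall x (2 * r)) ≤ K * μ (closedBall x r)

variable {μ : Measure X} {K : ℝ≥0∞}

theorem IsBallDoubling.mono (hμ : IsBallDoubling μ K) {K' : ℝ≥0∞} (hK : K ≤ K') :
    IsBallDoubling μ K' :=
  fun x r hr ↦ (hμ x r hr).trans (by gcongr)

theorem IsBallDoubling.measure_closedBall_two_pow_mul_le (hμ : IsBallDoubling μ K) (x : X)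
    {r : ℝ} (hr : 0 < r) (k : ℕ) : μ (closedBall x (2 ^ k * r)) ≤ K ^ k * μ (closedBall x r) := by
  induction k with
  | zero => simp
  | succ k ih =>
    calc μ (closedBall x (2 ^ (k + 1) * r)) = μ (closedBall x (2 * (2 ^ k * r))) := by ring_nf
      _ ≤ K * μ (closedBall x (2 ^ k * r)) := hμ x _ (by positivity)
      _ ≤ K * (K ^ k * μ (closedBall x r)) := by gcongr
      _ = K ^ (k + 1) * μ (closedBall x r) := by ring

end BallDoubling

theorem cube_eq_closedBall (n : ℕ) (c : Fin n → ℝ) {l : ℝ} (hl : 0 ≤ l) :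
    Cube n c l = closedBall c (l / 2) := by
  ext x
  simp [Cube, dist_pi_le_iff (by positivity : 0 ≤ l / 2), Real.dist_eq]

theorem IsDoubling.isBallDoubling {n : ℕ} {σ : Measure (Fin n → ℝ)} {C : ℝ}
    (hσ : IsDoubling σ C) : IsBallDoubling σ (ENNReal.ofReal C) := by
  intro x r hr
  have h := hσ x (2 * r) (by positivity)
  rwa [cube_eq_closedBall n x (by positivity), cube_eq_closedBall n x (by positivity),
    mul_div_cancel_left₀ _ two_ne_zero, mul_div_cancel_left₀ _ two_ne_zero] at h

section RadialProjection

variable {E : Type*} [NormedAddCommGroup E] [NormedSpace ℝ E]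

theorem inv_norm_mul_sub_le_norm_inv_norm_smul_sub (u v : E) :
    ‖u‖⁻¹ * (‖u - v‖ - |‖u‖ - ‖v‖|) ≤ ‖‖u‖⁻¹ • u - ‖v‖⁻¹ • v‖ := by
  rcases eq_or_ne u 0 with rfl | hu
  · simp
  have hu' : 0 < ‖u‖ := norm_pos_iff.mpr hu
  have hcorrection : ‖(‖u‖⁻¹ - ‖v‖⁻¹) • v‖ ≤ ‖u‖⁻¹ * |‖u‖ - ‖v‖| := by
    rcases eq_or_ne v 0 with rfl | hv
    · simp only [smul_zero, norm_zero]; positivity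
    have hv' : 0 < ‖v‖ := norm_pos_iff.mpr hv
    rw [norm_smul, Real.norm_eq_abs, inv_sub_inv hu'.ne' hv'.ne', abs_div, abs_mul,
      abs_of_pos hu', abs_of_pos hv', abs_sub_comm]
    field_simp
    rfl
  have hsplit : ‖u‖⁻¹ • u - ‖v‖⁻¹ • v = ‖u‖⁻¹ • (u - v) + (‖u‖⁻¹ - ‖v‖⁻¹) • v := by
    rw [smul_sub, sub_smul]; abel
  calc ‖u‖⁻¹ * (‖u - v‖ - |‖u‖ - ‖v‖|)
      = ‖‖u‖⁻¹ • (u - v)‖ - ‖u‖⁻¹ * |‖u‖ - ‖v‖| := by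
        rw [norm_smul, norm_inv, norm_norm]; ring
    _ ≤ ‖‖u‖⁻¹ • (u - v)‖ - ‖(‖u‖⁻¹ - ‖v‖⁻¹) • v‖ := by gcongr
    _ ≤ ‖‖u‖⁻¹ • u - ‖v‖⁻¹ • v‖ := by rw [hsplit]; exact norm_sub_le_norm_add _ _

def radialProj (c : E) (R : ℝ) (x : E) : E :=
  c + R • ‖x - c‖⁻¹ • (x - c)

theorem dist_radialProj_center {c x : E} (hx : x ≠ c) (R : ℝ) :
    dist (radialProj c R x) c = |R| := by
  have : ‖x - c‖ ≠ 0 := by simpa [sub_eq_zero] using hx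
  rw [radialProj, dist_eq_norm, add_sub_cancel_left, norm_smul, norm_smul, norm_inv, norm_norm,
    inv_mul_cancel₀ this, mul_one, Real.norm_eq_abs]

theorem dist_radialProj {c x : E} (hx : x ≠ c) (R : ℝ) :
    dist x (radialProj c R x) = |dist x c - R| := by
  have hx' : 0 < ‖x - c‖ := by simpa [sub_eq_zero] using hx
  have : x - radialProj c R x = (1 - R * ‖x - c‖⁻¹) • (x - c) := by
    rw [radialProj, sub_smul, one_smul, mul_smul]; abel
  rw [dist_eq_norm, this, norm_smul, Real.norm_eq_abs, dist_eq_norm, ← abs_of_pos hx', ← abs_mul,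
    abs_of_pos hx', sub_mul, one_mul, inv_mul_cancel_right₀ hx'.ne']

theorem mul_inv_dist_mul_sub_le_dist_radialProj (c x y : E) {R : ℝ} (hR : 0 ≤ R) :
    R * (dist x c)⁻¹ * (dist x y - |dist x c - dist y c|) ≤
      dist (radialProj c R x) (radialProj c R y) := by
  have h := inv_norm_mul_sub_le_norm_inv_norm_smul_sub (x - c) (y - c)
  rw [sub_sub_sub_cancel_right, ← dist_eq_norm x y] at h
  rw [radialProj, radialProj, dist_add_left, dist_smul₀, Real.norm_eq_abs, abs_of_nonneg hR,
    dist_eq_norm (‖x - c‖⁻¹ • (x - c)), dist_eq_norm x c, dist_eq_norm y c, mul_assoc]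
  gcongr

theorem lt_dist_radialProj (c : E) {r δ w : ℝ} (hr : 0 < r) (hw : 0 < w) (hδw : 2 * δ ≤ w)
    (hw4 : w ≤ 1 / 4) {x y : E} (hxr : dist x c ≤ r) (hxδ : (1 - δ) * r < dist x c)
    (hyr : dist y c ≤ r) (hyδ : (1 - δ) * r < dist y c) (hxy : 2 * w * r < dist x y) :
    w * r / 4 + w * r / 4 <
      dist (radialProj c ((1 - 3 * w / 2) * r) x) (radialProj c ((1 - 3 * w / 2) * r) y) := by
  set R := (1 - 3 * w / 2) * r with hR
  have hR0 : 0 < R := by nlinarith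
  have hRx : 1 - 3 * w / 2 ≤ R * (dist x c)⁻¹ := by
    rw [← div_eq_mul_inv, le_div_iff₀ (by nlinarith)]; nlinarith
  have hgap : 3 * w * r / 2 < dist x y - |dist x c - dist y c| := by
    have : |dist x c - dist y c| < δ * r := abs_sub_lt_iff.mpr ⟨by linarith, by linarith⟩
    nlinarith
  calc w * r / 4 + w * r / 4 < (1 - 3 * w / 2) * (3 * w * r / 2) := by
        nlinarith [mul_pos (mul_pos hw hr) (by linarith : (0 : ℝ) < 1 - 9 * w / 4)]
    _ ≤ R * (dist x c)⁻¹ * (dist x y - |dist x c - dist y c|) := by gcongr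
    _ ≤ dist (radialProj c R x) (radialProj c R y) :=
      mul_inv_dist_mul_sub_le_dist_radialProj c x y hR0.le

end RadialProjection

theorem Antitone.pairwise_disjoint_sdiff_succ {α : Type*} {S : ℕ → Set α} (hS : Antitone S) :
    Pairwise (Disjoint on fun j ↦ S j \ S (j + 1)) :=
  (pairwise_disjoint_on _).2 fun _ _ hij ↦
    disjoint_sdiff_self_left.mono_right (sdiff_subset.trans (hS (Nat.succ_le_of_lt hij)))

theorem Real.log_lt_of_lt_two_pow {x : ℝ} (hx : 0 < x) {k : ℕ} (h : x < 2 ^ (k + 1)) :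
    Real.log x < k + 1 :=
  calc Real.log x < Real.log (2 ^ (k + 1)) := Real.log_lt_log hx h
    _ = (k + 1) * Real.log 2 := by rw [Real.log_pow]; push_cast; rfl
    _ ≤ k + 1 := mul_le_of_le_one_right (by positivity) (Real.log_two_lt_d9.le.trans (by norm_num))

section Halo

variable {E : Type*} [NormedAddCommGroup E] [NormedSpace ℝ E] [ProperSpace E] [MeasurableSpace E]
  [OpensMeasurableSpace E] {μ : Measure E}

theorem IsBallDoubling.measure_halo_le_pow_four_mul_measure_annulus {K : ℝ≥0∞}
    (hμ : IsBallDoubling μ K) (c : E) {r δ w : ℝ} (hr : 0 < r) (hw : 0 < w) (hδw : 2 * δ ≤ w)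
    (hw4 : w ≤ 1 / 4) :
    μ (closedBall c r \ closedBall c ((1 - δ) * r)) ≤
      K ^ 4 * μ (closedBall c ((1 - w) * r) \ closedBall c ((1 - 2 * w) * r)) := by
  set R := (1 - 3 * w / 2) * r with hR
  have hR0 : 0 < R := by nlinarith
  have hmem : ∀ x ∈ closedBall c r \ closedBall c ((1 - δ) * r),
      dist x c ≤ r ∧ (1 - δ) * r < dist x c ∧ x ≠ c := by
    intro x hx
    simp only [mem_sdiff, mem_closedBall, not_le] at hx
    exact ⟨hx.1, hx.2, fun h ↦ by rw [h, dist_self] at hx; nlinarith⟩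
  have hbounded : TotallyBounded (closedBall c r \ closedBall c ((1 - δ) * r)) :=
    (isCompact_closedBall c r).totallyBounded.subset sdiff_subset
  refine hbounded.measure_le_mul_of_separated_balls μ (radialProj c R) (s := 2 * w * r)
    (ρ := w * r / 4) (by positivity) ?_ ?_ ?_
  · intro x hx
    obtain ⟨hxr, hxδ, hxc⟩ := hmem x hx
    have hxR : dist x (radialProj c R x) ≤ 3 * w * r / 2 := by
      rw [dist_radialProj hxc, abs_le]; constructor <;> nlinarith
    calc μ (closedBall x (2 * w * r))
        ≤ μ (closedBall (radialProj c R x) (2 ^ 4 * (w * r / 4))) :=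
          measure_mono (closedBall_subset_closedBall' (by nlinarith))
      _ ≤ K ^ 4 * μ (closedBall (radialProj c R x) (w * r / 4)) :=
          hμ.measure_closedBall_two_pow_mul_le _ (by positivity) 4
  · intro x hx y hy hxy
    exact lt_dist_radialProj c hr hw hδw hw4 (hmem x hx).1 (hmem x hx).2.1 (hmem y hy).1
      (hmem y hy).2.1 hxy
  · intro x hx z hz
    have hxR := dist_radialProj_center (hmem x hx).2.2 R
    rw [abs_of_pos hR0] at hxR
    rw [mem_closedBall] at hz
    have hup := dist_triangle z (radialProj c R x) c
    have hlow := dist_triangle_left (radialProj c R x) c z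
    simp only [mem_sdiff, mem_closedBall, not_le]
    constructor <;> nlinarith

theorem IsBallDoubling.natCast_mul_measure_halo_le {K : ℝ≥0∞} (hμ : IsBallDoubling μ K) (c : E)
    {r δ : ℝ} (hr : 0 < r) (hδ : 0 < δ) {m : ℕ} (hm : 2 ^ (m + 2) * δ ≤ 1) :
    m * μ (closedBall c r \ closedBall c ((1 - δ) * r)) ≤ K ^ 4 * μ (closedBall c r) := by
  set S : ℕ → Set E := fun j ↦ closedBall c ((1 - 2 ^ (j + 1) * δ) * r)
  have hS : Antitone S := fun i j hij ↦ closedBall_subset_closedBall (by gcongr; norm_num)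
  have hannulus : ∀ j ∈ Finset.range m,
      μ (closedBall c r \ closedBall c ((1 - δ) * r)) ≤ K ^ 4 * μ (S j \ S (j + 1)) := by
    intro j hj
    have hjm : 2 ^ (j + 1) ≤ (2 : ℝ) ^ m := pow_le_pow_right₀ (by norm_num) (Finset.mem_range.mp hj)
    have h := hμ.measure_halo_le_pow_four_mul_measure_annulus c hr (w := 2 ^ (j + 1) * δ)
      (by positivity) (by gcongr; exact le_self_pow₀ (by norm_num) (by omega))
      (by rw [pow_add] at hm; nlinarith)
    rwa [← mul_assoc, ← pow_succ'] at h
  calc (m : ℝ≥0∞) * μ (closedBall c r \ closedBall c ((1 - δ) * r))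
      = ∑ _j ∈ Finset.range m, μ (closedBall c r \ closedBall c ((1 - δ) * r)) := by simp
    _ ≤ ∑ j ∈ Finset.range m, K ^ 4 * μ (S j \ S (j + 1)) := Finset.sum_le_sum hannulus
    _ = K ^ 4 * μ (⋃ j ∈ Finset.range m, S j \ S (j + 1)) := by
      rw [measure_biUnion_finset (hS.pairwise_disjoint_sdiff_succ.set_pairwise _)
        fun _ _ ↦ measurableSet_closedBall.diff measurableSet_closedBall, Finset.mul_sum]
    _ ≤ K ^ 4 * μ (closedBall c r) := by
      gcongr
      refine iUnion₂_subset fun j _ ↦ sdiff_subset.trans (closedBall_subset_closedBall ?_)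
      have : 0 ≤ 2 ^ (j + 1) * δ := by positivity
      nlinarith

theorem IsBallDoubling.measure_halo_le {D : ℝ} (hμ : IsBallDoubling μ (.ofReal D)) (hD : 1 ≤ D)
    (c : E) {r δ : ℝ} (hr : 0 < r) (hδ : 0 < δ) (hδ1 : δ < 1) :
    μ (closedBall c r \ closedBall c ((1 - δ) * r)) ≤
      .ofReal (4 * D ^ 4 / Real.log (1 / δ)) * μ (closedBall c r) := by
  have hlog : 0 < Real.log (1 / δ) := Real.log_pos (by rw [lt_div_iff₀ hδ]; linarith)
  obtain ⟨k, hk, hk1⟩ := exists_nat_pow_near (one_le_one_div hδ hδ1.le) one_lt_two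
  have hlogk := Real.log_lt_of_lt_two_pow (by positivity) hk1
  rcases le_or_gt k 2 with hk2 | hk2
  · have hC : 1 ≤ 4 * D ^ 4 / Real.log (1 / δ) := by
      rw [one_le_div hlog]
      have : (1 : ℝ) ≤ D ^ 4 := one_le_pow₀ hD
      have : (k : ℝ) ≤ 2 := by exact_mod_cast hk2
      linarith
    calc μ (closedBall c r \ closedBall c ((1 - δ) * r)) ≤ μ (closedBall c r) :=
          measure_mono sdiff_subset
      _ ≤ _ := le_mul_of_one_le_left' (ENNReal.one_le_ofReal.mpr hC)
  · obtain ⟨m, rfl⟩ : ∃ m, k = m + 2 := ⟨k - 2, by omega⟩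
    have hm0 : (m : ℝ≥0∞) ≠ 0 := Nat.cast_ne_zero.mpr (by omega)
    have hKm : ENNReal.ofReal D ^ 4 ≤ m * .ofReal (4 * D ^ 4 / Real.log (1 / δ)) := by
      rw [← ENNReal.ofReal_pow (by linarith), ← ENNReal.ofReal_natCast, ← ENNReal.ofReal_mul
        (by positivity), ← mul_div_assoc, ENNReal.ofReal_le_ofReal_iff (by positivity),
        le_div_iff₀ hlog]
      have : (1 : ℝ) ≤ m := by exact_mod_cast (by omega : 1 ≤ m)
      push_cast at hlogk
      nlinarith [pow_pos (by linarith : (0 : ℝ) < D) 4]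
    refine (ENNReal.mul_le_mul_iff_right hm0 (ENNReal.natCast_ne_top m)).mp ?_
    calc (m : ℝ≥0∞) * μ (closedBall c r \ closedBall c ((1 - δ) * r))
        ≤ ENNReal.ofReal D ^ 4 * μ (closedBall c r) :=
          hμ.natCast_mul_measure_halo_le c hr hδ ((le_div_iff₀ hδ).mp hk)
      _ ≤ m * (.ofReal (4 * D ^ 4 / Real.log (1 / δ)) * μ (closedBall c r)) := by
        rw [← mul_assoc]; gcongr

end Halo

theorem doubling_halo_estimate_general (n : ℕ) (Cd : ℝ) :
    ∃ C : ℝ, 0 < C ∧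
      ∀ (σ : Measure (Fin n → ℝ)), IsLocallyFiniteMeasure σ → IsDoubling σ Cd →
        ∀ (c : Fin n → ℝ) (l δ : ℝ), 0 < l → 0 < δ → δ < 1 →
          σ (Cube n c l \ Cube n c ((1 - δ) * l)) ≤
            ENNReal.ofReal (C / Real.log (1 / δ)) * σ (Cube n c l) := by
  refine ⟨4 * max Cd 1 ^ 4, by positivity, fun σ _ hσ c l δ hl hδ hδ1 ↦ ?_⟩
  rw [cube_eq_closedBall n c hl.le, cube_eq_closedBall n c (by nlinarith), mul_div_assoc]
  exact (hσ.isBallDoubling.mono (ENNReal.ofReal_le_ofReal (le_max_left _ _))).measure_halo_le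
    (le_max_right _ _) c (half_pos hl) hδ hδ1

/-- The halo estimate for doubling measures: for every cube `Q` and `0 < δ < 1`,
`|Q ∖ (1-δ)Q|_σ ≤ (C / ln(1/δ)) |Q|_σ`. -/
theorem doubling_halo_estimate (n : ℕ) (hn : 0 < n) (Cd : ℝ) :
    ∃ C : ℝ, 0 < C ∧
      ∀ (σ : Measure (Fin n → ℝ)), IsLocallyFiniteMeasure σ → IsDoubling σ Cd →
        ∀ (c : Fin n → ℝ) (l δ : ℝ), 0 < l → 0 < δ → δ < 1 →
          σ (Cube n c l \ Cube n c ((1 - δ) * l)) ≤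
            ENNReal.ofReal (C / Real.log (1 / δ)) * σ (Cube n c l) :=
  doubling_halo_estimate_general n Cd
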